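/- arXiv:2507.07729 — 3 statements merged into one kernel-verified Lean document; each statement's English description precedes it below -/
import Mathlib

section
/- Let s, y be vectors in ℝ^d with sᵀy > 0, and let W be a positive-definite d×d matrix satisfying W s = y. Let H_k be a symmetric d×d matrix, p > 0, ρ > 0. Then the matrix H_{k+1} := H_k + a s sᵀ - b (H_k y sᵀ + s yᵀ H_k), where b = 1/(sᵀy + ρ/p) and a = (1 + (yᵀ H_k y)·b)/(sᵀy + ρ/(2p)), satisfies the continuous Lyapunov equation H_{k+1}(y sᵀ + (ρ/(2p)) I) + (s yᵀ + (ρ/(2p)) I) H_{k+1} = 2 s sᵀ + (ρ/p) H_k. -/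
/-!
The S-BFGS update is a rank-two correction of `H` by `s sᵀ` and `H y sᵀ + s yᵀ H`. Products of
rank-one matrices with `y sᵀ` and `s yᵀ` are again rank-one matrices in the same directions, so both
sides of the Lyapunov equation are combinations of `H`, `s sᵀ`, `H y sᵀ` and `s yᵀ H`. Comparing
coefficients, the equation reduces to the two scalar identities `b (sᵀy + ρ/p) = 1` and
`a (sᵀy + ρ/(2p)) = 1 + b yᵀHy`, which are how `a` and `b` are chosen.
-/

open Matrix

namespace Matrix

variable {R n : Type*} [CommRing R] [Fintype n]

theorem IsSymm.vecMul_eq_mulVec {H : Matrix n n R} (hH : H.IsSymm) (y : n → R) :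
    y ᵥ* H = H *ᵥ y := by
  rw [← mulVec_transpose, hH.eq]

theorem vecMulVec_mulVec' (u v w : n → R) : vecMulVec u v *ᵥ w = (v ⬝ᵥ w) • u := by
  rw [vecMulVec_mulVec, op_smul_eq_smul]

def sbfgsUpdate (H : Matrix n n R) (s y : n → R) (a b : R) : Matrix n n R :=
  H + a • vecMulVec s s - b • (vecMulVec (H *ᵥ y) s + vecMulVec s (H *ᵥ y))

theorem sbfgsUpdate_lyapunov [DecidableEq n] {H : Matrix n n R} (hH : H.IsSymm)
    (s y : n → R) {a b c : R} (hb : b * (s ⬝ᵥ y + 2 * c) = 1)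
    (ha : a * (s ⬝ᵥ y + c) = 1 + (y ⬝ᵥ (H *ᵥ y)) * b) :
    sbfgsUpdate H s y a b * (vecMulVec y s + c • 1)
      + (vecMulVec s y + c • 1) * sbfgsUpdate H s y a b
      = (2 : R) • vecMulVec s s + (2 * c) • H := by
  have hys : y ⬝ᵥ s = s ⬝ᵥ y := dotProduct_comm y s
  have hHyy : (H *ᵥ y) ⬝ᵥ y = y ⬝ᵥ (H *ᵥ y) := dotProduct_comm _ _
  simp only [sbfgsUpdate, add_mul, mul_add, sub_mul, mul_sub, smul_mul_assoc, mul_smul_comm,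
    Matrix.mul_one, Matrix.one_mul, mul_vecMulVec, vecMulVec_mul, vecMulVec_mulVec',
    one_mulVec, hH.vecMul_eq_mulVec, smul_vecMulVec, hys, hHyy, smul_add, smul_sub, smul_smul]
  match_scalars
  · linear_combination -hb
  · linear_combination 2 * ha
  · ring
  · linear_combination -hb

end Matrix

theorem sbfgs_lyapunov_general {d : ℕ} (s y : Fin d → ℝ) (hsy : 0 < s ⬝ᵥ y)
    (Hk : Matrix (Fin d) (Fin d) ℝ) (hHk : Hk.IsSymm)
    (p ρ : ℝ) (hp : 0 < p) (hρ : 0 < ρ)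
    (b a : ℝ) (hb : b = 1 / (s ⬝ᵥ y + ρ / p))
    (ha : a = (1 + (y ⬝ᵥ (Hk *ᵥ y)) * b) / (s ⬝ᵥ y + ρ / (2 * p)))
    (H1 : Matrix (Fin d) (Fin d) ℝ)
    (hH1 : H1 = Hk + a • vecMulVec s s
        - b • (vecMulVec (Hk *ᵥ y) s + vecMulVec s (Hk *ᵥ y))) :
    H1 * (vecMulVec y s + (ρ / (2 * p)) • (1 : Matrix (Fin d) (Fin d) ℝ))
      + (vecMulVec s y + (ρ / (2 * p)) • (1 : Matrix (Fin d) (Fin d) ℝ)) * H1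
      = (2 : ℝ) • vecMulVec s s + (ρ / p) • Hk := by
  have hc : 2 * (ρ / (2 * p)) = ρ / p := by field_simp
  have hb' : b * (s ⬝ᵥ y + 2 * (ρ / (2 * p))) = 1 := by
    rw [hc, hb, one_div_mul_cancel (by positivity)]
  have ha' : a * (s ⬝ᵥ y + ρ / (2 * p)) = 1 + (y ⬝ᵥ (Hk *ᵥ y)) * b := by
    rw [ha, div_mul_cancel₀ _ (by positivity)]
  rw [← hc, hH1]
  exact sbfgsUpdate_lyapunov hHk s y hb' ha'

/-- S-BFGS update satisfies the continuous Lyapunov equation (Proposition 2.1). -/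
theorem sbfgs_lyapunov {d : ℕ} (s y : Fin d → ℝ) (hsy : 0 < s ⬝ᵥ y)
    (W : Matrix (Fin d) (Fin d) ℝ) (hW : W.PosDef) (hWs : W *ᵥ s = y)
    (Hk : Matrix (Fin d) (Fin d) ℝ) (hHk : Hk.IsSymm)
    (p ρ : ℝ) (hp : 0 < p) (hρ : 0 < ρ)
    (b a : ℝ) (hb : b = 1 / (s ⬝ᵥ y + ρ / p))
    (ha : a = (1 + (y ⬝ᵥ (Hk *ᵥ y)) * b) / (s ⬝ᵥ y + ρ / (2 * p)))
    (H1 : Matrix (Fin d) (Fin d) ℝ)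
    (hH1 : H1 = Hk + a • vecMulVec s s
        - b • (vecMulVec (Hk *ᵥ y) s + vecMulVec s (Hk *ᵥ y))) :
    H1 * (vecMulVec y s + (ρ / (2 * p)) • (1 : Matrix (Fin d) (Fin d) ℝ))
      + (vecMulVec s y + (ρ / (2 * p)) • (1 : Matrix (Fin d) (Fin d) ℝ)) * H1
      = (2 : ℝ) • vecMulVec s s + (ρ / p) • Hk :=
  sbfgs_lyapunov_general s y hsy Hk hHk p ρ hp hρ b a hb ha H1 hH1
end

section
/- Let s, y ∈ ℝ^d, ρ, p > 0, and suppose the curvature condition yᵀs ≥ m‖s‖² holds for some m > 0 and s ≠ 0. If H_k ∈ ℝ^{d×d} is symmetric positive definite, then the S-BFGS update H_{k+1} = H_k + a s sᵀ - b(H_k y sᵀ + s yᵀ H_k), with b = 1/(sᵀy + ρ/p) and a = (1 + b·yᵀH_k y)/(sᵀy + ρ/(2p)), is symmetric positive definite. -/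
/-!
Completing the square in the curvature direction rewrites the update as the congruence
`H₁ = Mᵀ Hₖ M + (a - b² yᵀHₖy) s sᵀ` with `M = I - b y sᵀ`. By the matrix determinant lemma
`det M = 1 - b sᵀy = (ρ/p) b > 0`, so `Mᵀ Hₖ M` is positive definite, and the remaining rank-one
term is positive semidefinite because `a - b² yᵀHₖy = 1/B + (A - B) yᵀHₖy / (A² B) > 0` where
`A = sᵀy + ρ/p > B = sᵀy + ρ/(2p) > 0`, the curvature condition giving `sᵀy ≥ 0`.
-/

open Matrix

theorem Matrix.det_one_sub_smul_vecMulVec {n R : Type*} [Fintype n] [DecidableEq n] [CommRing R]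
    (b : R) (y s : n → R) : (1 - b • vecMulVec y s).det = 1 - b * (s ⬝ᵥ y) := by
  rw [sub_eq_add_neg, ← neg_smul, ← smul_vecMulVec, vecMulVec_eq Unit,
    det_one_add_replicateCol_mul_replicateRow, dotProduct_smul, smul_eq_mul, neg_mul,
    ← sub_eq_add_neg]

theorem Matrix.transpose_one_sub_smul_vecMulVec_mul_mul {n R : Type*} [Fintype n] [DecidableEq n]
    [CommRing R] {H : Matrix n n R} (hH : Hᵀ = H) (b : R) (y s : n → R) :
    (1 - b • vecMulVec y s)ᵀ * H * (1 - b • vecMulVec y s) =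
      H - b • (vecMulVec (H *ᵥ y) s + vecMulVec s (H *ᵥ y))
        + (b ^ 2 * (y ⬝ᵥ (H *ᵥ y))) • vecMulVec s s := by
  have hyH : y ᵥ* H = H *ᵥ y := by rw [← mulVec_transpose, hH]
  simp only [transpose_sub, transpose_one, transpose_smul, transpose_vecMulVec, sub_mul, mul_sub,
    one_mul, mul_one, Matrix.smul_mul, Matrix.mul_smul, mul_vecMulVec, vecMulVec_mul, smul_mulVec,
    vecMulVec_mulVec, op_smul_eq_smul, smul_vecMulVec, hyH, dotProduct_mulVec]
  module

theorem one_div_sq_mul_lt_one_add_one_div_mul_div {A B q : ℝ} (hB : 0 < B) (hBA : B ≤ A)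
    (hq : 0 ≤ q) : (1 / A) ^ 2 * q < (1 + 1 / A * q) / B := by
  have hA : 0 < A := hB.trans_le hBA
  rw [lt_div_iff₀ hB]
  field_simp
  nlinarith

theorem sbfgs_posDef_general {d : ℕ} (s y : Fin d → ℝ) (m : ℝ) (hm : 0 < m)
    (hcurv : m * (s ⬝ᵥ s) ≤ y ⬝ᵥ s)
    (Hk : Matrix (Fin d) (Fin d) ℝ) (hHk : Hk.PosDef)
    (p ρ : ℝ) (hp : 0 < p) (hρ : 0 < ρ)
    (b a : ℝ) (hb : b = 1 / (s ⬝ᵥ y + ρ / p))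
    (ha : a = (1 + b * (y ⬝ᵥ (Hk *ᵥ y))) / (s ⬝ᵥ y + ρ / (2 * p)))
    (H1 : Matrix (Fin d) (Fin d) ℝ)
    (hH1 : H1 = Hk + a • vecMulVec s s
        - b • (vecMulVec (Hk *ᵥ y) s + vecMulVec s (Hk *ᵥ y))) :
    H1.PosDef := by
  have hsy : 0 ≤ s ⬝ᵥ y := by
    rw [dotProduct_comm]
    exact (mul_nonneg hm.le (by simpa using dotProduct_star_self_nonneg s)).trans hcurv
  have hB : 0 < s ⬝ᵥ y + ρ / (2 * p) := by positivity
  have hBA : s ⬝ᵥ y + ρ / (2 * p) ≤ s ⬝ᵥ y + ρ / p := by gcongr; linarith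
  have hdet : (1 - b • vecMulVec y s).det ≠ 0 := by
    rw [det_one_sub_smul_vecMulVec, hb, one_div, sub_ne_zero, ne_comm, Ne,
      inv_mul_eq_one₀ (hB.trans_le hBA).ne']
    simp [hρ.ne', hp.ne']
  have hcoeff : b ^ 2 * (y ⬝ᵥ (Hk *ᵥ y)) < a := by
    rw [ha, hb]
    refine one_div_sq_mul_lt_one_add_one_div_mul_div hB hBA ?_
    simpa using hHk.posSemidef.dotProduct_mulVec_nonneg y
  have hHk_symm : Hkᵀ = Hk := (by simpa using hHk.isHermitian : Hk.IsSymm).eq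
  have hupdate : H1 = (1 - b • vecMulVec y s)ᴴ * Hk * (1 - b • vecMulVec y s)
      + (a - b ^ 2 * (y ⬝ᵥ (Hk *ᵥ y))) • vecMulVec s s := by
    rw [conjTranspose_eq_transpose_of_trivial, transpose_one_sub_smul_vecMulVec_mul_mul hHk_symm,
      hH1]
    module
  rw [hupdate]
  exact (hHk.conjTranspose_mul_mul_same (mulVec_injective_of_det_ne_zero hdet)).add_posSemidef
    ((posSemidef_vecMulVec_self_star s).smul (sub_nonneg.mpr hcoeff.le))

/-- Positive-definiteness of the S-BFGS update (Lemma 2.2). -/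
theorem sbfgs_posDef {d : ℕ} (s y : Fin d → ℝ) (m : ℝ) (hm : 0 < m) (hs : s ≠ 0)
    (hcurv : m * (s ⬝ᵥ s) ≤ y ⬝ᵥ s)
    (Hk : Matrix (Fin d) (Fin d) ℝ) (hHk : Hk.PosDef)
    (p ρ : ℝ) (hp : 0 < p) (hρ : 0 < ρ)
    (b a : ℝ) (hb : b = 1 / (s ⬝ᵥ y + ρ / p))
    (ha : a = (1 + b * (y ⬝ᵥ (Hk *ᵥ y))) / (s ⬝ᵥ y + ρ / (2 * p)))
    (H1 : Matrix (Fin d) (Fin d) ℝ)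
    (hH1 : H1 = Hk + a • vecMulVec s s
        - b • (vecMulVec (Hk *ᵥ y) s + vecMulVec s (Hk *ᵥ y))) :
    H1.PosDef :=
  sbfgs_posDef_general s y m hm hcurv Hk hHk p ρ hp hρ b a hb ha H1 hH1
end

section
/- Let s, y ∈ ℝ^d with sᵀy > 0, H_k symmetric positive definite, ρ, p > 0, b = 1/(sᵀy + ρ/p), a = (1 + b·yᵀH_k y)/(sᵀy + ρ/(2p)). Then a - b²·(yᵀ H_k y) > 1/(sᵀy + ρ/p) > 0. -/
/-!
With `A = sᵀy + ρ/p`, `B = sᵀy + ρ/(2p) < A` and `q = yᵀ H_k y ≥ 0`, one has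
`b + b² q = (1 + b q) / A < (1 + b q) / B = a`.
-/

open Matrix

theorem one_div_lt_one_add_div_mul_div_sub {A B q : ℝ} (hB : 0 < B) (hBA : B < A) (hq : 0 ≤ q) :
    1 / A < (1 + 1 / A * q) / B - (1 / A) ^ 2 * q := by
  have hA : 0 < A := hB.trans hBA
  have hnum : 0 < 1 + 1 / A * q := by positivity
  have hsplit : (1 + 1 / A * q) / A = 1 / A + (1 / A) ^ 2 * q := by
    field_simp
  have hgain : (1 + 1 / A * q) / A < (1 + 1 / A * q) / B := div_lt_div_of_pos_left hnum hB hBA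
  linarith

/-- Key scalar inequality for positive-definiteness of the S-BFGS update. -/
theorem sbfgs_scalar_ineq {d : ℕ} (s y : Fin d → ℝ) (hsy : 0 < s ⬝ᵥ y)
    (Hk : Matrix (Fin d) (Fin d) ℝ) (hHk : Hk.PosDef)
    (p ρ : ℝ) (hp : 0 < p) (hρ : 0 < ρ)
    (b a : ℝ) (hb : b = 1 / (s ⬝ᵥ y + ρ / p))
    (ha : a = (1 + b * (y ⬝ᵥ (Hk *ᵥ y))) / (s ⬝ᵥ y + ρ / (2 * p))) :
    1 / (s ⬝ᵥ y + ρ / p) < a - b ^ 2 * (y ⬝ᵥ (Hk *ᵥ y))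
      ∧ 0 < 1 / (s ⬝ᵥ y + ρ / p) := by
  subst ha hb
  have hq : 0 ≤ y ⬝ᵥ (Hk *ᵥ y) := by
    simpa using hHk.posSemidef.dotProduct_mulVec_nonneg y
  have hshift : ρ / (2 * p) < ρ / p := div_lt_div_of_pos_left hρ hp (by linarith)
  exact ⟨one_div_lt_one_add_div_mul_div_sub (by positivity) (by linarith) hq, by positivity⟩
end
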